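/- arXiv:1602.08306 — 3 statements merged into one kernel-verified Lean document; each statement's English description precedes it below -/
import Mathlib

section
/- Suppose a : ℝ × V × V → ℂ is a non-autonomous sesquilinear form satisfying |a(t,v,w)| ≤ Λ‖v‖_V‖w‖_V and Re a(t,v,v) ≥ λ‖v‖_V² for all t ∈ ℝ and v,w ∈ V, with λ, Λ > 0. Let θ ∈ ℂ with Re θ > 0 and choose δ = min{λ/(Λ+1), Re θ/(|Im θ|+1)}. Then for all v in the energy space E = H^{1/2}(ℝ; H) ∩ L²(ℝ; V), the form e(v,v) := ∫_ℝ −(D_t^{1/2}v | D_t^{1/2} H_t (1+δH_t)v)_H + ⟨(θ + 𝔄(t))v, (1+δH_t)v⟩ dt satisfies Re e(v,v) ≥ min{λ/(Λ+1), Re θ/(|Im θ|+1)}·‖v‖_E², where ‖v‖_E² = ∫_ℝ ‖v‖_H² + ‖D_t^{1/2}v‖_H² + ‖v‖_V² dt. -/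
open MeasureTheory
open scoped InnerProductSpace

/-!
Expanding the integrand, the two skew terms `∫(D^{1/2}H_t v | D^{1/2}v)_H` and
`∫(H_t v | v)_H` have vanishing real part, so
`Re e(v,v) = δ‖D^{1/2}v‖² + Re θ ‖v‖²_H - δ Im θ · Im ∫(H_t v | v)_H`
`+ Re ∫a(v,v) + δ Re ∫a(v,H_t v)`.
Since `H_t` is an isometry, Cauchy–Schwarz and AM–GM give `|∫(H_t v | v)_H| ≤ ‖v‖²_H` and
`|∫a(v,H_t v)| ≤ Λ‖v‖²_V`, so the right side is at least
`δ‖D^{1/2}v‖² + (Re θ - δ|Im θ|)‖v‖²_H + (λ - δΛ)‖v‖²_V`, and the choice of `δ` makes both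
brackets at least `δ`.
-/

theorem norm_integral_le_of_norm_le_mul_of_integral_sq_eq {α E : Type*} [MeasurableSpace α]
    {μ : Measure α} [NormedAddCommGroup E] [NormedSpace ℝ E] {b : α → E} {F G : α → ℝ} {C : ℝ}
    (hC : 0 ≤ C) (hb : ∀ t, ‖b t‖ ≤ C * (F t * G t)) (hbi : Integrable b μ)
    (hGi : Integrable (fun t => G t ^ 2) μ) (hFG : ∫ t, F t ^ 2 ∂μ = ∫ t, G t ^ 2 ∂μ) :
    ‖∫ t, b t ∂μ‖ ≤ C * ∫ t, G t ^ 2 ∂μ := by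
  by_cases hFi : Integrable (fun t => F t ^ 2) μ
  · have amgm : ∀ t, ‖b t‖ ≤ C / 2 * (F t ^ 2 + G t ^ 2) := fun t =>
      (hb t).trans (by nlinarith [sq_nonneg (F t - G t)])
    calc ‖∫ t, b t ∂μ‖ ≤ ∫ t, ‖b t‖ ∂μ := norm_integral_le_integral_norm _
      _ ≤ ∫ t, C / 2 * (F t ^ 2 + G t ^ 2) ∂μ :=
          integral_mono hbi.norm ((hFi.add hGi).const_mul _) amgm
      _ = C * ∫ t, G t ^ 2 ∂μ := by
          rw [integral_const_mul, integral_add hFi hGi, hFG]; ring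
  -- Otherwise `∫ F ^ 2` is the junk value `0`, so `G`, and with it `b`, vanishes almost everywhere.
  · have hG0 : (fun t => G t ^ 2) =ᵐ[μ] 0 :=
      (integral_eq_zero_iff_of_nonneg (fun t => sq_nonneg (G t)) hGi).1
        (hFG ▸ integral_undef hFi)
    have hb0 : ∫ t, b t ∂μ = 0 := integral_eq_zero_of_ae <| hG0.mono fun t ht => by
      have : G t = 0 := pow_eq_zero_iff two_ne_zero |>.1 ht
      simpa [this] using hb t
    rw [hb0, norm_zero]
    exact mul_nonneg hC (integral_nonneg fun t => sq_nonneg (G t))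

theorem mul_integral_le_re_integral {α 𝕜 : Type*} [RCLike 𝕜] [MeasurableSpace α]
    {μ : Measure α} {f : α → 𝕜} {g : α → ℝ} {c : ℝ} (hf : Integrable f μ) (hg : Integrable g μ)
    (h : ∀ t, c * g t ≤ RCLike.re (f t)) : c * ∫ t, g t ∂μ ≤ RCLike.re (∫ t, f t ∂μ) := by
  rw [← integral_const_mul, ← integral_re hf]
  exact integral_mono (hg.const_mul c) hf.re h

theorem integral_energy_integrand_eq {α H : Type*} [MeasurableSpace α] {μ : Measure α}
    [NormedAddCommGroup H] [InnerProductSpace ℂ H] {x y u w : α → H} {p q : α → ℂ} (δ : ℝ) (θ : ℂ)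
    (hxy : Integrable (fun t => ⟪x t, y t⟫_ℂ) μ) (hy : Integrable (fun t => ‖y t‖ ^ 2) μ)
    (hu : Integrable (fun t => ‖u t‖ ^ 2) μ) (hwu : Integrable (fun t => ⟪w t, u t⟫_ℂ) μ)
    (hp : Integrable p μ) (hq : Integrable q μ) :
    ∫ t, (-⟪x t - δ • y t, y t⟫_ℂ + θ * ⟪u t + δ • w t, u t⟫_ℂ + (p t + (δ : ℂ) * q t)) ∂μ
      = -∫ t, ⟪x t, y t⟫_ℂ ∂μ + δ * (∫ t, ‖y t‖ ^ 2 ∂μ : ℝ) + θ * (∫ t, ‖u t‖ ^ 2 ∂μ : ℝ)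
        + θ * δ * ∫ t, ⟪w t, u t⟫_ℂ ∂μ + ∫ t, p t ∂μ + δ * ∫ t, q t ∂μ := by
  have expand : ∀ t, -⟪x t - δ • y t, y t⟫_ℂ + θ * ⟪u t + δ • w t, u t⟫_ℂ + (p t + (δ : ℂ) * q t)
      = -⟪x t, y t⟫_ℂ + δ * (‖y t‖ ^ 2 : ℝ) + θ * (‖u t‖ ^ 2 : ℝ) + θ * δ * ⟪w t, u t⟫_ℂ
        + p t + δ * q t := fun t => by
    simp only [inner_sub_left, inner_add_left, inner_smul_left_eq_smul, inner_self_eq_norm_sq_to_K,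
      RCLike.ofReal_eq_complex_ofReal, Complex.real_smul]
    push_cast
    ring
  have hy' : Integrable (fun t => ((‖y t‖ ^ 2 : ℝ) : ℂ)) μ := hy.ofReal
  have hu' : Integrable (fun t => ((‖u t‖ ^ 2 : ℝ) : ℂ)) μ := hu.ofReal
  simp_rw [expand]
  rw [integral_add (by fun_prop) (by fun_prop), integral_add (by fun_prop) (by fun_prop),
    integral_add (by fun_prop) (by fun_prop), integral_add (by fun_prop) (by fun_prop),
    integral_add (by fun_prop) (by fun_prop), integral_neg, integral_const_mul, integral_const_mul,
    integral_const_mul, integral_const_mul, integral_complex_ofReal, integral_complex_ofReal]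

theorem hidden_coercivity_general
    {V H : Type*} [NormedAddCommGroup V] [InnerProductSpace ℂ V]
    [NormedAddCommGroup H] [InnerProductSpace ℂ H]
    (incl : V →L[ℂ] H)
    (lam Lam : ℝ) (hlam : 0 < lam) (hLam : 0 < Lam)
    (a : ℝ → V → V → ℂ)
    (hbdd : ∀ t v w, ‖a t v w‖ ≤ Lam * ‖v‖ * ‖w‖)
    (hcoer : ∀ t v, lam * ‖v‖ ^ 2 ≤ (a t v v).re)
    (θ : ℂ) (hθ : 0 < θ.re)
    (δ : ℝ) (hδ : δ = min (lam / (Lam + 1)) (θ.re / (|θ.im| + 1)))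
    (v Hv : ℝ → V) (Dv DHv : ℝ → H)
    -- multiplier facts for the Hilbert transform and the half-derivative:
    (hskewD : (∫ t : ℝ, ⟪DHv t, Dv t⟫_ℂ).re = 0)
    (hskewH : (∫ t : ℝ, ⟪incl (Hv t), incl (v t)⟫_ℂ).re = 0)
    (hisoH : ∫ t : ℝ, ‖incl (Hv t)‖ ^ 2 = ∫ t : ℝ, ‖incl (v t)‖ ^ 2)
    (hisoV : ∫ t : ℝ, ‖Hv t‖ ^ 2 = ∫ t : ℝ, ‖v t‖ ^ 2)
    -- integrability of all the integrands involved: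
    (hiDv : Integrable (fun t : ℝ => ‖Dv t‖ ^ 2))
    (hiV : Integrable (fun t : ℝ => ‖v t‖ ^ 2))
    (hiH : Integrable (fun t : ℝ => ‖incl (v t)‖ ^ 2))
    (hiDD : Integrable (fun t : ℝ => ⟪DHv t, Dv t⟫_ℂ))
    (hiHH : Integrable (fun t : ℝ => ⟪incl (Hv t), incl (v t)⟫_ℂ))
    (hia : Integrable (fun t : ℝ => a t (v t) (v t)))
    (hiaH : Integrable (fun t : ℝ => a t (v t) (Hv t))) :
    (∫ t : ℝ,
        (-⟪DHv t - δ • Dv t, Dv t⟫_ℂ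
          + θ * ⟪incl (v t) + δ • incl (Hv t), incl (v t)⟫_ℂ
          + (a t (v t) (v t) + (δ : ℂ) * a t (v t) (Hv t)))).re
      ≥ min (lam / (Lam + 1)) (θ.re / (|θ.im| + 1)) *
          ∫ t : ℝ, (‖incl (v t)‖ ^ 2 + ‖Dv t‖ ^ 2 + ‖v t‖ ^ 2) := by
  have hδ0 : 0 ≤ δ := hδ ▸ le_min (by positivity) (by positivity)
  have hδV : δ * (Lam + 1) ≤ lam := (le_div_iff₀ (by positivity)).1 (hδ ▸ min_le_left _ _)
  have hδH : δ * (|θ.im| + 1) ≤ θ.re := (le_div_iff₀ (by positivity)).1 (hδ ▸ min_le_right _ _)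
  have hB : ‖∫ t, ⟪incl (Hv t), incl (v t)⟫_ℂ‖ ≤ ∫ t, ‖incl (v t)‖ ^ 2 :=
    (norm_integral_le_of_norm_le_mul_of_integral_sq_eq zero_le_one
      (fun t => (norm_inner_le_norm _ _).trans_eq (one_mul _).symm) hiHH hiH hisoH).trans_eq
      (one_mul _)
  have haH : ‖∫ t, a t (v t) (Hv t)‖ ≤ Lam * ∫ t, ‖v t‖ ^ 2 :=
    norm_integral_le_of_norm_le_mul_of_integral_sq_eq hLam.le
      (fun t => (hbdd t _ _).trans_eq (by ring)) hiaH hiV hisoV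
  have ha : lam * ∫ t, ‖v t‖ ^ 2 ≤ (∫ t, a t (v t) (v t)).re :=
    mul_integral_le_re_integral hia hiV fun t => hcoer t (v t)
  rw [integral_energy_integrand_eq δ θ hiDD hiDv hiH hiHH hia hiaH,
    integral_add (f := fun t => ‖incl (v t)‖ ^ 2 + ‖Dv t‖ ^ 2) (hiH.add hiDv) hiV,
    integral_add hiH hiDv, ← hδ]
  simp only [Complex.add_re, Complex.neg_re, Complex.mul_re, Complex.mul_im, Complex.ofReal_re,
    Complex.ofReal_im, hskewD, hskewH]
  have hIH : 0 ≤ ∫ t, ‖incl (v t)‖ ^ 2 := integral_nonneg fun t => sq_nonneg _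
  have hIV : 0 ≤ ∫ t, ‖v t‖ ^ 2 := integral_nonneg fun t => sq_nonneg _
  have hBim : θ.im * (∫ t, ⟪incl (Hv t), incl (v t)⟫_ℂ).im ≤ |θ.im| * ∫ t, ‖incl (v t)‖ ^ 2 :=
    (le_abs_self _).trans <| (abs_mul _ _).trans_le <| mul_le_mul_of_nonneg_left
      ((Complex.abs_im_le_norm _).trans hB) (abs_nonneg _)
  have haHre := neg_le_of_abs_le ((Complex.abs_re_le_norm _).trans haH)
  linarith [mul_le_mul_of_nonneg_left hBim hδ0, mul_le_mul_of_nonneg_left haHre hδ0,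
    mul_le_mul_of_nonneg_right hδV hIV, mul_le_mul_of_nonneg_right hδH hIH]

/-- **Hidden coercivity of the parabolic operator.**
Let `a : ℝ × V × V → ℂ` be a non-autonomous form with `|a(t,v,w)| ≤ Λ‖v‖‖w‖` and
`Re a(t,v,v) ≥ λ‖v‖²`, let `Re θ > 0` and `δ = min{λ/(Λ+1), Re θ/(|Im θ|+1)}`.
For `v` in the energy space `E = H^{1/2}(ℝ;H) ∩ L²(ℝ;V)` write `Dv = D_t^{1/2}v`,
`Hv = H_t v` (Hilbert transform) and `DHv = D_t^{1/2}H_t v`; the relevant multiplier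
facts (`H_t` skew-adjoint on `L²(ℝ;H)`, so that `Re∫(D^{1/2}v | D^{1/2}H_t v) = 0` and
`Re∫(v|H_t v)_H = 0`, and `H_t` an isometry, while `D_t^{1/2}H_t(1+δH_t)v = DHv - δ Dv`)
are recorded as hypotheses.  Then the form
`e(v,v) = ∫ -(D^{1/2}v | D^{1/2}H_t(1+δH_t)v)_H + ⟨(θ+𝔄(t))v, (1+δH_t)v⟩ dt`
satisfies `Re e(v,v) ≥ min{λ/(Λ+1), Re θ/(|Im θ|+1)}·‖v‖_E²`. -/
theorem hidden_coercivity
    {V H : Type*} [NormedAddCommGroup V] [InnerProductSpace ℂ V] [CompleteSpace V]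
    [NormedAddCommGroup H] [InnerProductSpace ℂ H] [CompleteSpace H]
    (incl : V →L[ℂ] H)
    (lam Lam : ℝ) (hlam : 0 < lam) (hLam : 0 < Lam)
    (a : ℝ → V → V → ℂ)
    (hbdd : ∀ t v w, ‖a t v w‖ ≤ Lam * ‖v‖ * ‖w‖)
    (hcoer : ∀ t v, lam * ‖v‖ ^ 2 ≤ (a t v v).re)
    (θ : ℂ) (hθ : 0 < θ.re)
    (δ : ℝ) (hδ : δ = min (lam / (Lam + 1)) (θ.re / (|θ.im| + 1)))
    (v Hv : ℝ → V) (Dv DHv : ℝ → H)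
    -- multiplier facts for the Hilbert transform and the half-derivative:
    (hskewD : (∫ t : ℝ, ⟪DHv t, Dv t⟫_ℂ).re = 0)
    (hskewH : (∫ t : ℝ, ⟪incl (Hv t), incl (v t)⟫_ℂ).re = 0)
    (hisoH : ∫ t : ℝ, ‖incl (Hv t)‖ ^ 2 = ∫ t : ℝ, ‖incl (v t)‖ ^ 2)
    (hisoV : ∫ t : ℝ, ‖Hv t‖ ^ 2 = ∫ t : ℝ, ‖v t‖ ^ 2)
    -- integrability of all the integrands involved:
    (hiDv : Integrable (fun t : ℝ => ‖Dv t‖ ^ 2))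
    (hiV : Integrable (fun t : ℝ => ‖v t‖ ^ 2))
    (hiH : Integrable (fun t : ℝ => ‖incl (v t)‖ ^ 2))
    (hiHV : Integrable (fun t : ℝ => ‖Hv t‖ ^ 2))
    (hiDD : Integrable (fun t : ℝ => ⟪DHv t, Dv t⟫_ℂ))
    (hiHH : Integrable (fun t : ℝ => ⟪incl (Hv t), incl (v t)⟫_ℂ))
    (hia : Integrable (fun t : ℝ => a t (v t) (v t)))
    (hiaH : Integrable (fun t : ℝ => a t (v t) (Hv t))) :
    (∫ t : ℝ,
        (-⟪DHv t - δ • Dv t, Dv t⟫_ℂ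
          + θ * ⟪incl (v t) + δ • incl (Hv t), incl (v t)⟫_ℂ
          + (a t (v t) (v t) + (δ : ℂ) * a t (v t) (Hv t)))).re
      ≥ min (lam / (Lam + 1)) (θ.re / (|θ.im| + 1)) *
          ∫ t : ℝ, (‖incl (v t)‖ ^ 2 + ‖Dv t‖ ^ 2 + ‖v t‖ ^ 2) :=
  hidden_coercivity_general incl lam Lam hlam hLam a hbdd hcoer θ hθ δ hδ v Hv Dv DHv hskewD hskewH
    hisoH hisoV hiDv hiV hiH hiDD hiHH hia hiaH
end

section
/- Let f : ℝ → ℂ be bounded, measurable, and satisfy sup_I (1/ℓ(I)) ∫_I ∫_I |f(t)−f(s)|²/|t−s|² ds dt ≤ M for all bounded intervals I. Let ρ ≥ 0 be smooth with compact support and ∫ρ = 1, ρ_n(t) = nρ(nt). Then each convolution f_n = ρ_n ∗ f satisfies the same bound: sup_I (1/ℓ(I)) ∫_I ∫_I |f_n(t)−f_n(s)|²/|t−s|² ds dt ≤ M. -/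
open MeasureTheory Set ENNReal

/-- **Mollification preserves the scale-invariant half-derivative condition.**
If a bounded measurable `f : ℝ → ℂ` satisfies
`∫_I ∫_I |f(t)-f(s)|²/|t-s|² ds dt ≤ M ℓ(I)` for all bounded intervals `I`, and
`ρₙ(t) = n ρ(nt)` is a mollifier (`ρ ≥ 0` smooth, compactly supported, `∫ρ = 1`),
then each `fₙ = ρₙ ∗ f` satisfies the same bound with the same constant `M`. -/
theorem mollification_preserves_scale_invariant_bound
    (f : ℝ → ℂ) (hmeas : Measurable f) (B : ℝ) (hbdd : ∀ t, ‖f t‖ ≤ B)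
    (M : ℝ) (hM : 0 ≤ M)
    (hf : ∀ a b : ℝ, a ≤ b →
      ∫⁻ t in Icc a b, ∫⁻ s in Icc a b,
        ENNReal.ofReal (‖f t - f s‖ ^ 2 / |t - s| ^ 2)
        ≤ ENNReal.ofReal (M * (b - a)))
    (ρ : ℝ → ℝ) (hρsmooth : ContDiff ℝ (⊤ : ℕ∞) ρ) (hρsupp : HasCompactSupport ρ)
    (hρpos : ∀ t, 0 ≤ ρ t) (hρint : ∫ t : ℝ, ρ t = 1)
    (n : ℕ) (hn : 0 < n)
    (fn : ℝ → ℂ) (hfn : ∀ t : ℝ, fn t = ∫ r : ℝ, ((n : ℝ) * ρ ((n : ℝ) * r)) • f (t - r)) :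
    ∀ a b : ℝ, a ≤ b →
      ∫⁻ t in Icc a b, ∫⁻ s in Icc a b,
        ENNReal.ofReal (‖fn t - fn s‖ ^ 2 / |t - s| ^ 2)
        ≤ ENNReal.ofReal (M * (b - a)) := by
  intro a b hab
  set ρn : ℝ → ℝ := fun r => (n : ℝ) * ρ ((n : ℝ) * r) with hρn_def
  have hnR : (0:ℝ) < n := by exact_mod_cast hn
  have hρn_cont : Continuous ρn :=
    continuous_const.mul (hρsmooth.continuous.comp (continuous_const.mul continuous_id))
  have hρn_nonneg : ∀ r, 0 ≤ ρn r := fun r => mul_nonneg hnR.le (hρpos _)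
  have hρn_supp : HasCompactSupport fun r : ℝ => ρ ((n:ℝ) * r) :=
    hρsupp.comp_homeomorph (Homeomorph.mulLeft₀ (n:ℝ) hnR.ne')
  have hρn_int : Integrable ρn := by
    refine Integrable.const_mul ?_ _
    exact ((hρsmooth.continuous.comp (continuous_const.mul continuous_id))).integrable_of_hasCompactSupport hρn_supp
  have hρn_integral : ∫ r, ρn r = 1 := by
    have h1 : (∫ r : ℝ, ρ ((n:ℝ) * r)) = |(n:ℝ)⁻¹| • ∫ y, ρ y := Measure.integral_comp_mul_left ρ (n:ℝ)
    simp only [hρn_def]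
    rw [integral_const_mul, h1, hρint, abs_of_nonneg (inv_nonneg.2 hnR.le)]
    simp [mul_inv_cancel₀ hnR.ne']
  have hmass : ∫⁻ r, ENNReal.ofReal (ρn r) = 1 := by
    rw [← ofReal_integral_eq_lintegral_ofReal hρn_int (Filter.Eventually.of_forall hρn_nonneg),
      hρn_integral, ENNReal.ofReal_one]
  have hfmeas : ∀ c : ℝ, Measurable fun r => f (c - r) :=
    fun c => hmeas.comp (measurable_const.sub measurable_id)
  have hint : ∀ t : ℝ, Integrable fun r => ρn r • f (t - r) := by
    intro t
    refine Integrable.mono' (hρn_int.mul_const B)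
      ((hρn_cont.measurable.smul (hfmeas t)).aestronglyMeasurable)
      (Filter.Eventually.of_forall fun r => ?_)
    calc ‖ρn r • f (t - r)‖ = |ρn r| * ‖f (t - r)‖ := by rw [norm_smul, Real.norm_eq_abs]
      _ ≤ ρn r * B := by
          rw [abs_of_nonneg (hρn_nonneg r)]
          exact mul_le_mul_of_nonneg_left (hbdd _) (hρn_nonneg r)
  have hdiff : ∀ t s : ℝ, fn t - fn s = ∫ r, ρn r • (f (t - r) - f (s - r)) := by
    intro t s
    rw [hfn, hfn, ← integral_sub (hint t) (hint s)]
    simp only [smul_sub]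
  have hg_meas : Measurable fun r => ENNReal.ofReal (ρn r) := hρn_cont.measurable.ennreal_ofReal
  have hsq : ∀ x : ℝ≥0∞, x ^ (2:ℝ) = x * x := fun x => by
    rw [show (2:ℝ) = ((2:ℕ):ℝ) by norm_num, ENNReal.rpow_natCast, sq]
  have hhalf : ∀ x : ℝ≥0∞, (x ^ (1/2:ℝ)) ^ (2:ℝ) = x := fun x => by
    rw [← ENNReal.rpow_mul]; norm_num
  -- pointwise Jensen/Cauchy–Schwarz bound
  have key : ∀ t s : ℝ, ENNReal.ofReal (‖fn t - fn s‖ ^ 2)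
      ≤ ∫⁻ r, ENNReal.ofReal (ρn r) * ENNReal.ofReal (‖f (t - r) - f (s - r)‖ ^ 2) := by
    intro t s
    set d : ℝ → ℝ := fun r => ‖f (t - r) - f (s - r)‖ with hd_def
    have hd_meas : Measurable d := ((hfmeas t).sub (hfmeas s)).norm
    have hd_nonneg : ∀ r, 0 ≤ d r := fun r => norm_nonneg _
    have hint2 : Integrable fun r => ρn r * d r := by
      have h0 : Integrable fun r => ρn r • (f (t - r) - f (s - r)) := by
        simpa only [smul_sub] using ((hint t).sub (hint s) : Integrable (fun r => ρn r • f (t - r) - ρn r • f (s - r)))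
      refine h0.norm.congr (Filter.Eventually.of_forall fun r => ?_)
      simp only [hd_def]
      rw [norm_smul, Real.norm_eq_abs, abs_of_nonneg (hρn_nonneg r)]
    have h1 : ‖fn t - fn s‖ ≤ ∫ r, ρn r * d r := by
      rw [hdiff t s]
      refine (norm_integral_le_integral_norm _).trans_eq ?_
      congr 1; funext r
      rw [norm_smul, Real.norm_eq_abs, abs_of_nonneg (hρn_nonneg r)]
    have h2 : ENNReal.ofReal ‖fn t - fn s‖
        ≤ ∫⁻ r, ENNReal.ofReal (ρn r) * ENNReal.ofReal (d r) := by
      calc ENNReal.ofReal ‖fn t - fn s‖ ≤ ENNReal.ofReal (∫ r, ρn r * d r) :=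
            ENNReal.ofReal_le_ofReal h1
        _ = ∫⁻ r, ENNReal.ofReal (ρn r * d r) :=
            ofReal_integral_eq_lintegral_ofReal hint2
              (Filter.Eventually.of_forall fun r => mul_nonneg (hρn_nonneg r) (hd_nonneg r))
        _ = ∫⁻ r, ENNReal.ofReal (ρn r) * ENNReal.ofReal (d r) := by
            simp_rw [ENNReal.ofReal_mul (hρn_nonneg _)]
    set g : ℝ → ℝ≥0∞ := fun r => ENNReal.ofReal (ρn r) with hg_def
    set h : ℝ → ℝ≥0∞ := fun r => ENNReal.ofReal (d r) with hh_def
    have hh_meas : Measurable h := hd_meas.ennreal_ofReal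
    have hCS : (∫⁻ r, g r * h r) ^ (2:ℝ) ≤ ∫⁻ r, g r * h r ^ (2:ℝ) := by
      have hpq : Real.HolderConjugate 2 2 := Real.holderConjugate_iff.mpr ⟨one_lt_two, by norm_num⟩
      have hF : AEMeasurable (fun r => g r ^ (1/2:ℝ)) volume := (hg_meas.pow_const _).aemeasurable
      have hG : AEMeasurable (fun r => g r ^ (1/2:ℝ) * h r) volume :=
        ((hg_meas.pow_const _).mul hh_meas).aemeasurable
      have hH := ENNReal.lintegral_mul_le_Lp_mul_Lq volume hpq hF hG
      have e1 : ∀ r : ℝ, ((fun r => g r ^ (1/2:ℝ)) * fun r => g r ^ (1/2:ℝ) * h r) r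
          = g r * h r := by
        intro r
        simp only [Pi.mul_apply]
        rw [← mul_assoc, ← hsq (g r ^ (1/2:ℝ)), hhalf]
      have e2 : ∀ r : ℝ, (g r ^ (1/2:ℝ)) ^ (2:ℝ) = g r := fun r => hhalf _
      have e3 : ∀ r : ℝ, (g r ^ (1/2:ℝ) * h r) ^ (2:ℝ) = g r * h r ^ (2:ℝ) := by
        intro r
        rw [ENNReal.mul_rpow_of_nonneg _ _ (by norm_num : (0:ℝ) ≤ 2), hhalf]
      rw [lintegral_congr e1, lintegral_congr e2, lintegral_congr e3, hmass, ENNReal.one_rpow,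
        one_mul] at hH
      calc (∫⁻ r, g r * h r) ^ (2:ℝ)
          ≤ ((∫⁻ r, g r * h r ^ (2:ℝ)) ^ (1/2:ℝ)) ^ (2:ℝ) :=
            ENNReal.rpow_le_rpow hH (by norm_num)
        _ = ∫⁻ r, g r * h r ^ (2:ℝ) := hhalf _
    have e4 : ENNReal.ofReal (‖fn t - fn s‖ ^ 2) = (ENNReal.ofReal ‖fn t - fn s‖) ^ (2:ℝ) := by
      rw [hsq, ← sq, ENNReal.ofReal_pow (norm_nonneg _), sq]
    have e5 : ∀ r : ℝ, g r * h r ^ (2:ℝ)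
        = ENNReal.ofReal (ρn r) * ENNReal.ofReal (‖f (t - r) - f (s - r)‖ ^ 2) := by
      intro r
      rw [hsq, ← sq, hh_def]
      simp only []
      rw [← ENNReal.ofReal_pow (hd_nonneg r), sq, ← sq]
    calc ENNReal.ofReal (‖fn t - fn s‖ ^ 2)
        = (ENNReal.ofReal ‖fn t - fn s‖) ^ (2:ℝ) := e4
      _ ≤ (∫⁻ r, g r * h r) ^ (2:ℝ) := ENNReal.rpow_le_rpow h2 (by norm_num)
      _ ≤ ∫⁻ r, g r * h r ^ (2:ℝ) := hCS
      _ = ∫⁻ r, ENNReal.ofReal (ρn r) * ENNReal.ofReal (‖f (t - r) - f (s - r)‖ ^ 2) :=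
          lintegral_congr e5
  -- pointwise bound including the division
  have keydiv : ∀ t s : ℝ, ENNReal.ofReal (‖fn t - fn s‖ ^ 2 / |t - s| ^ 2)
      ≤ ∫⁻ r, ENNReal.ofReal (ρn r)
          * ENNReal.ofReal (‖f (t - r) - f (s - r)‖ ^ 2 / |t - s| ^ 2) := by
    intro t s
    rcases eq_or_ne t s with rfl | hts
    · simp
    · have hc : (0:ℝ) < |t - s| ^ 2 := by
        have : t - s ≠ 0 := sub_ne_zero.2 hts
        positivity
      have hcne : ENNReal.ofReal (|t - s| ^ 2) ≠ 0 := (ENNReal.ofReal_pos.2 hc).ne'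
      calc ENNReal.ofReal (‖fn t - fn s‖ ^ 2 / |t - s| ^ 2)
          = ENNReal.ofReal (‖fn t - fn s‖ ^ 2) / ENNReal.ofReal (|t - s| ^ 2) :=
            ENNReal.ofReal_div_of_pos hc
        _ ≤ (∫⁻ r, ENNReal.ofReal (ρn r) * ENNReal.ofReal (‖f (t - r) - f (s - r)‖ ^ 2))
              / ENNReal.ofReal (|t - s| ^ 2) := ENNReal.div_le_div_right (key t s) _
        _ = ∫⁻ r, (ENNReal.ofReal (ρn r) * ENNReal.ofReal (‖f (t - r) - f (s - r)‖ ^ 2))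
              / ENNReal.ofReal (|t - s| ^ 2) := by
            simp only [div_eq_mul_inv]
            rw [← lintegral_mul_const' _ _ (ENNReal.inv_ne_top.2 hcne)]
        _ = ∫⁻ r, ENNReal.ofReal (ρn r)
              * ENNReal.ofReal (‖f (t - r) - f (s - r)‖ ^ 2 / |t - s| ^ 2) := by
            refine lintegral_congr fun r => ?_
            rw [ENNReal.ofReal_div_of_pos hc, mul_div_assoc]
  -- master measurability fact
  have hKmeas : ∀ {α : Type} [MeasurableSpace α] (u v w : α → ℝ), Measurable u → Measurable v →
      Measurable w → Measurable fun p => ENNReal.ofReal (ρn (u p))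
        * ENNReal.ofReal (‖f (v p - u p) - f (w p - u p)‖ ^ 2 / |v p - w p| ^ 2) := by
    intro α _ u v w hu hv hw
    refine Measurable.mul ((hρn_cont.measurable.comp hu).ennreal_ofReal) ?_
    refine Measurable.ennreal_ofReal (Measurable.div ?_ ?_)
    · exact (((hmeas.comp (hv.sub hu)).sub (hmeas.comp (hw.sub hu))).norm).pow_const 2
    · exact ((hv.sub hw).abs).pow_const 2
  -- translation invariance of the inner double integral
  have hinner : ∀ r : ℝ,
      (∫⁻ t in Icc a b, ∫⁻ s in Icc a b,
        ENNReal.ofReal (‖f (t - r) - f (s - r)‖ ^ 2 / |t - s| ^ 2))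
      ≤ ENNReal.ofReal (M * (b - a)) := by
    intro r
    have hmp : MeasurePreserving (fun x : ℝ => x - r) volume volume :=
      measurePreserving_sub_right volume r
    have hemb : MeasurableEmbedding (fun x : ℝ => x - r) :=
      (MeasurableEquiv.subRight r).measurableEmbedding
    have hpre : (fun x : ℝ => x - r) ⁻¹' Icc (a - r) (b - r) = Icc a b := by
      rw [preimage_sub_const_Icc]
      congr 1 <;> ring
    have step_s : ∀ t : ℝ,
        (∫⁻ s in Icc a b, ENNReal.ofReal (‖f (t - r) - f (s - r)‖ ^ 2 / |t - s| ^ 2))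
        = ∫⁻ s in Icc (a - r) (b - r),
            ENNReal.ofReal (‖f (t - r) - f s‖ ^ 2 / |(t - r) - s| ^ 2) := by
      intro t
      have h0 := hmp.setLIntegral_comp_preimage_emb hemb
        (fun s => ENNReal.ofReal (‖f (t - r) - f s‖ ^ 2 / |(t - r) - s| ^ 2))
        (Icc (a - r) (b - r))
      rw [hpre] at h0
      rw [← h0]
      refine lintegral_congr fun s => ?_
      rw [sub_sub_sub_cancel_right]
    calc (∫⁻ t in Icc a b, ∫⁻ s in Icc a b,
            ENNReal.ofReal (‖f (t - r) - f (s - r)‖ ^ 2 / |t - s| ^ 2))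
        = ∫⁻ t in Icc a b, ∫⁻ s in Icc (a - r) (b - r),
            ENNReal.ofReal (‖f (t - r) - f s‖ ^ 2 / |(t - r) - s| ^ 2) :=
          lintegral_congr step_s
      _ = ∫⁻ t in Icc (a - r) (b - r), ∫⁻ s in Icc (a - r) (b - r),
            ENNReal.ofReal (‖f t - f s‖ ^ 2 / |t - s| ^ 2) := by
          have h0 := hmp.setLIntegral_comp_preimage_emb hemb
            (fun t => ∫⁻ s in Icc (a - r) (b - r),
              ENNReal.ofReal (‖f t - f s‖ ^ 2 / |t - s| ^ 2))
            (Icc (a - r) (b - r))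
          rw [hpre] at h0
          exact h0
      _ ≤ ENNReal.ofReal (M * (b - r - (a - r))) := hf (a - r) (b - r) (by linarith)
      _ = ENNReal.ofReal (M * (b - a)) := by ring_nf
  -- main computation
  calc ∫⁻ t in Icc a b, ∫⁻ s in Icc a b,
        ENNReal.ofReal (‖fn t - fn s‖ ^ 2 / |t - s| ^ 2)
      ≤ ∫⁻ t in Icc a b, ∫⁻ s in Icc a b, ∫⁻ r, ENNReal.ofReal (ρn r)
          * ENNReal.ofReal (‖f (t - r) - f (s - r)‖ ^ 2 / |t - s| ^ 2) :=
        lintegral_mono fun t => lintegral_mono fun s => keydiv t s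
    _ = ∫⁻ t in Icc a b, ∫⁻ r, ∫⁻ s in Icc a b, ENNReal.ofReal (ρn r)
          * ENNReal.ofReal (‖f (t - r) - f (s - r)‖ ^ 2 / |t - s| ^ 2) := by
        refine lintegral_congr fun t => ?_
        exact lintegral_lintegral_swap
          ((hKmeas (fun p : ℝ × ℝ => p.2) (fun _ => t) (fun p => p.1)
            measurable_snd measurable_const measurable_fst).aemeasurable)
    _ = ∫⁻ r, ∫⁻ t in Icc a b, ∫⁻ s in Icc a b, ENNReal.ofReal (ρn r)
          * ENNReal.ofReal (‖f (t - r) - f (s - r)‖ ^ 2 / |t - s| ^ 2) := by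
        refine lintegral_lintegral_swap ?_
        refine Measurable.aemeasurable ?_
        exact Measurable.lintegral_prod_right
          (hKmeas (fun q : (ℝ × ℝ) × ℝ => q.1.2) (fun q => q.1.1) (fun q => q.2)
            (measurable_snd.comp measurable_fst) (measurable_fst.comp measurable_fst)
            measurable_snd)
    _ ≤ ∫⁻ r, ENNReal.ofReal (ρn r) * ENNReal.ofReal (M * (b - a)) := by
        refine lintegral_mono fun r => ?_
        have e1 : ∀ t : ℝ, (∫⁻ s in Icc a b, ENNReal.ofReal (ρn r)
            * ENNReal.ofReal (‖f (t - r) - f (s - r)‖ ^ 2 / |t - s| ^ 2))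
            = ENNReal.ofReal (ρn r) * ∫⁻ s in Icc a b,
                ENNReal.ofReal (‖f (t - r) - f (s - r)‖ ^ 2 / |t - s| ^ 2) :=
          fun t => lintegral_const_mul' _ _ ENNReal.ofReal_ne_top
        rw [lintegral_congr e1, lintegral_const_mul' _ _ ENNReal.ofReal_ne_top]
        exact mul_le_mul_right (hinner r) _
    _ = ENNReal.ofReal (M * (b - a)) := by
        rw [lintegral_mul_const' _ _ ENNReal.ofReal_ne_top, hmass, one_mul]
end

section
/- Let a : ℝ → ℂ satisfy the scale-invariant bound sup_I (1/ℓ(I)) ∫_I ∫_I |a(t)−a(s)|²/|t−s|² ds dt ≤ M over all bounded intervals I. Then a (has a representative that) is Hölder continuous of exponent 1/2: |a(t)−a(s)| ≤ C√M |t−s|^{1/2} for all t,s, with C an absolute constant. -/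
/-!
Since `|t - s| ≤ ℓ(I)` on `I × I`, the hypothesis and Cauchy–Schwarz bound the mean oscillation
`⨍_I ⨍_I |a t - a s|` by `√M ℓ(I)^{1/2}` (a Campanato condition). Averages over nested intervals
`J ⊆ I` then differ by at most `(ℓ(I) / ℓ(J)) √M ℓ(I)^{1/2}`; telescoping over the scales
`r, r/4, r/16, …` shows that the averages over `[x - r, x + r]` converge as `r → 0` at rate
`√(M r)`, uniformly in `x`. The limit `b` agrees with `a` at Lebesgue points, and comparing
`b t`, `b s` with averages at scale `|t - s|` gives the Hölder bound.
-/

open MeasureTheory Set ENNReal Filter Topology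

section MeanOscillation

variable {α E : Type*} [MeasurableSpace α] {μ : Measure α}
  [NormedAddCommGroup E] {f : α → E} {s t : Set α}

theorem lintegral_sq_le_measure_univ_mul {g : α → ℝ≥0∞} (hg : AEMeasurable g μ) :
    (∫⁻ x, g x ∂μ) ^ 2 ≤ μ univ * ∫⁻ x, g x ^ 2 ∂μ := by
  have hCS := ENNReal.lintegral_mul_le_Lp_mul_Lq μ Real.HolderConjugate.two_two hg
    (aemeasurable_const (b := (1 : ℝ≥0∞)))
  simp only [Pi.mul_apply, mul_one, one_rpow, lintegral_const, one_mul] at hCS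
  calc (∫⁻ x, g x ∂μ) ^ 2
      ≤ ((∫⁻ x, g x ^ (2 : ℝ) ∂μ) ^ (1 / 2 : ℝ) * μ univ ^ (1 / 2 : ℝ)) ^ 2 := by gcongr
    _ = μ univ * ∫⁻ x, g x ^ 2 ∂μ := by
      rw [mul_pow, ← ENNReal.rpow_natCast, ← ENNReal.rpow_natCast, ← ENNReal.rpow_mul,
        ← ENNReal.rpow_mul]
      norm_num [mul_comm]

theorem integrableOn_of_lintegral_lintegral_enorm_sub_ne_top
    (hf : AEStronglyMeasurable f (μ.restrict s)) (hs : μ s ≠ ∞) (hs₀ : μ s ≠ 0)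
    (hD : ∫⁻ x in s, ∫⁻ y in s, ‖f x - f y‖ₑ ∂μ ∂μ ≠ ∞) : IntegrableOn f s μ := by
  obtain ⟨x₀, hx₀⟩ : ∃ x₀, ∫⁻ y in s, ‖f x₀ - f y‖ₑ ∂μ ≠ ∞ := by
    by_contra! h
    simp [h, hs₀] at hD
  have hdiff : IntegrableOn (fun y => f x₀ - f y) s μ :=
    ⟨aestronglyMeasurable_const.sub hf, hx₀.lt_top⟩
  convert (integrableOn_const (C := f x₀) hs).sub hdiff using 1
  ext y
  simp

theorem norm_setAverage_sub_setAverage_le [NormedSpace ℝ E] [CompleteSpace E]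
    (hst : s ⊆ t) (hf : AEStronglyMeasurable f (μ.restrict t)) (ht : μ t ≠ ∞) (hs₀ : μ s ≠ 0)
    (hD : ∫⁻ x in t, ∫⁻ y in t, ‖f x - f y‖ₑ ∂μ ∂μ ≠ ∞) :
    ‖(⨍ x in s, f x ∂μ) - ⨍ x in t, f x ∂μ‖
      ≤ (∫⁻ x in t, ∫⁻ y in t, ‖f x - f y‖ₑ ∂μ ∂μ).toReal / (μ.real s * μ.real t) := by
  have ht₀ : μ t ≠ 0 := fun h => hs₀ (measure_mono_null hst h)
  have hft : IntegrableOn f t μ :=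
    integrableOn_of_lintegral_lintegral_enorm_sub_ne_top hf ht ht₀ hD
  have hfs : IntegrableOn f s μ := hft.mono_set hst
  have hs : μ s ≠ ∞ := measure_ne_top_of_subset hst ht
  have hs_real : μ.real s ≠ 0 := (measureReal_ne_zero_iff hs).mpr hs₀
  have ht_real : μ.real t ≠ 0 := (measureReal_ne_zero_iff ht).mpr ht₀
  have hdouble : ∫ x in s, ∫ y in t, (f x - f y) ∂μ ∂μ
      = μ.real t • ∫ x in s, f x ∂μ - μ.real s • ∫ y in t, f y ∂μ := by
    have hinner : ∀ x, ∫ y in t, (f x - f y) ∂μ = μ.real t • f x - ∫ y in t, f y ∂μ :=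
      fun x => by rw [integral_sub (integrableOn_const (C := f x) ht) hft, setIntegral_const]
    simp_rw [hinner]
    rw [integral_sub (f := fun x => μ.real t • f x) (hfs.smul (μ.real t))
        (integrableOn_const (C := ∫ y in t, f y ∂μ) hs),
      integral_smul, setIntegral_const]
  have havg : (⨍ x in s, f x ∂μ) - ⨍ x in t, f x ∂μ
      = (μ.real s * μ.real t)⁻¹ • ∫ x in s, ∫ y in t, (f x - f y) ∂μ ∂μ := by
    rw [hdouble, setAverage_eq, setAverage_eq, smul_sub, smul_smul, smul_smul]
    congr 2 <;> field_simp
  have hbound : ‖∫ x in s, ∫ y in t, (f x - f y) ∂μ ∂μ‖ₑ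
      ≤ ∫⁻ x in t, ∫⁻ y in t, ‖f x - f y‖ₑ ∂μ ∂μ :=
    calc ‖∫ x in s, ∫ y in t, (f x - f y) ∂μ ∂μ‖ₑ
        ≤ ∫⁻ x in s, ‖∫ y in t, (f x - f y) ∂μ‖ₑ ∂μ := enorm_integral_le_lintegral_enorm _
      _ ≤ ∫⁻ x in s, ∫⁻ y in t, ‖f x - f y‖ₑ ∂μ ∂μ :=
        lintegral_mono fun x => enorm_integral_le_lintegral_enorm _
      _ ≤ _ := lintegral_mono_set hst
  rw [havg, norm_smul, norm_inv, Real.norm_of_nonneg (by positivity), inv_mul_eq_div]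
  gcongr
  rw [← toReal_enorm]
  exact ENNReal.toReal_mono hD hbound

end MeanOscillation

section Telescoping

variable {E : Type*} [NormedAddCommGroup E] {g : ℝ → E} {K : ℝ}

theorem norm_sub_le_of_norm_sub_le_of_le_four_mul (hK : 0 ≤ K)
    (hg : ∀ r' r, 0 < r' → r' ≤ r → r ≤ 4 * r' → ‖g r' - g r‖ ≤ K * √r)
    {r' r : ℝ} (hr' : 0 < r') (hr : r' ≤ r) : ‖g r' - g r‖ ≤ K * (2 * √r - √r') := by
  obtain ⟨n, hn⟩ : ∃ n : ℕ, r / r' < 4 ^ n := pow_unbounded_of_one_lt _ (by norm_num)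
  rw [div_lt_iff₀ hr'] at hn
  induction n generalizing r with
  | zero => linarith
  | succ n ih =>
    have hsqrt : √r' ≤ √r := Real.sqrt_le_sqrt hr
    by_cases hr4 : r ≤ 4 * r'
    · calc ‖g r' - g r‖ ≤ K * √r := hg r' r hr' hr hr4
        _ ≤ K * (2 * √r - √r') := by gcongr; linarith
    · have hquarter : √(r / 4) = √r / 2 := by
        rw [Real.sqrt_div' _ (by norm_num), show (4 : ℝ) = 2 ^ 2 by norm_num,
          Real.sqrt_sq (by norm_num)]
      have ih' := ih (r := r / 4) (by linarith) (by rw [pow_succ] at hn; linarith)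
      calc ‖g r' - g r‖ ≤ ‖g r' - g (r / 4)‖ + ‖g (r / 4) - g r‖ :=
            norm_sub_le_norm_sub_add_norm_sub ..
        _ ≤ K * (2 * √(r / 4) - √r') + K * √r :=
            add_le_add ih' (hg _ _ (by linarith) (by linarith) (by linarith))
        _ = K * (2 * √r - √r') := by rw [hquarter]; ring

theorem exists_tendsto_nhdsGT_zero_of_norm_sub_le [CompleteSpace E]
    (hg : ∀ r' r, 0 < r' → r' ≤ r → ‖g r' - g r‖ ≤ K * √r) :
    ∃ L, Tendsto g (𝓝[>] 0) (𝓝 L) ∧ ∀ r, 0 < r → ‖L - g r‖ ≤ K * √r := by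
  have hcauchy : Cauchy (map g (𝓝[>] 0)) := by
    rw [Metric.cauchy_iff]
    refine ⟨inferInstance, fun ε hε => ?_⟩
    have hsmall : Tendsto (fun δ => 2 * (K * √δ)) (𝓝[>] 0) (𝓝 0) := by
      have : Continuous fun δ : ℝ => 2 * (K * √δ) := by fun_prop
      simpa using (this.tendsto 0).mono_left nhdsWithin_le_nhds
    obtain ⟨δ, hδε, hδ⟩ := ((hsmall.eventually (gt_mem_nhds hε)).and self_mem_nhdsWithin).exists
    refine ⟨g '' Ioc 0 δ, image_mem_map (Ioc_mem_nhdsGT hδ), ?_⟩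
    rintro _ ⟨r₁, hr₁, rfl⟩ _ ⟨r₂, hr₂, rfl⟩
    calc dist (g r₁) (g r₂) ≤ ‖g r₁ - g δ‖ + ‖g r₂ - g δ‖ := by
          rw [dist_eq_norm, norm_sub_rev (g r₂)]; exact norm_sub_le_norm_sub_add_norm_sub ..
      _ ≤ K * √δ + K * √δ := add_le_add (hg _ _ hr₁.1 hr₁.2) (hg _ _ hr₂.1 hr₂.2)
      _ < ε := by linarith
  obtain ⟨L, hL⟩ := cauchy_map_iff_exists_tendsto.mp hcauchy
  refine ⟨L, hL, fun r hr => le_of_tendsto ((hL.sub_const (g r)).norm) ?_⟩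
  filter_upwards [Ioc_mem_nhdsGT hr] with r' hr' using hg r' r hr'.1 hr'.2

end Telescoping

section Campanato

open Metric

variable {E : Type*} [NormedAddCommGroup E] {a : ℝ → E} {K : ℝ}

/-- `⨍_I ⨍_I ‖a t - a s‖ ≤ K ℓ(I)^{1/2}` for every interval `I`, with the averages cleared. -/
def CampanatoHalf (a : ℝ → E) (K : ℝ) : Prop :=
  ∀ x y, x < y → ∫⁻ t in Icc x y, ∫⁻ s in Icc x y, ‖a t - a s‖ₑ
    ≤ ENNReal.ofReal (K * (y - x) ^ 2 * √(y - x))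

theorem CampanatoHalf.lintegral_lintegral_closedBall_le (hosc : CampanatoHalf a K)
    {x r : ℝ} (hr : 0 < r) :
    ∫⁻ t in closedBall x r, ∫⁻ s in closedBall x r, ‖a t - a s‖ₑ
      ≤ ENNReal.ofReal (K * (2 * r) ^ 2 * √(2 * r)) := by
  rw [Real.closedBall_eq_Icc]
  convert hosc (x - r) (x + r) (by linarith) using 4 <;> ring

theorem CampanatoHalf.locallyIntegrable (hosc : CampanatoHalf a K)
    (ha : AEStronglyMeasurable a) : LocallyIntegrable a := fun x =>
  ⟨closedBall x 1, closedBall_mem_nhds x one_pos,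
    integrableOn_of_lintegral_lintegral_enorm_sub_ne_top ha.restrict measure_closedBall_lt_top.ne
      (by simp [Real.volume_closedBall])
      (ne_top_of_le_ne_top ofReal_ne_top (hosc.lintegral_lintegral_closedBall_le one_pos))⟩

variable [NormedSpace ℝ E] [CompleteSpace E]

theorem CampanatoHalf.norm_average_closedBall_sub_le (hosc : CampanatoHalf a K)
    (ha : AEStronglyMeasurable a) (hK : 0 ≤ K)
    {x z r ρ : ℝ} (hρ : 0 < ρ) (hsub : closedBall z ρ ⊆ closedBall x r) :
    ‖(⨍ t in closedBall z ρ, a t) - ⨍ t in closedBall x r, a t‖ ≤ r / ρ * K * √(2 * r) := by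
  have hρ₀ : volume (closedBall z ρ) ≠ 0 := by simp [Real.volume_closedBall, hρ]
  have hr : 0 < r := by
    by_contra! h
    exact hρ₀ (measure_mono_null hsub (by simp [Real.volume_closedBall]; linarith))
  have hD := hosc.lintegral_lintegral_closedBall_le (x := x) hr
  refine (norm_setAverage_sub_setAverage_le hsub ha.restrict measure_closedBall_lt_top.ne hρ₀
    (ne_top_of_le_ne_top ofReal_ne_top hD)).trans ?_
  rw [Real.volume_real_closedBall hρ.le, Real.volume_real_closedBall hr.le]
  calc _ ≤ K * (2 * r) ^ 2 * √(2 * r) / (2 * ρ * (2 * r)) := by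
        gcongr
        exact toReal_le_of_le_ofReal (by positivity) hD
    _ = r / ρ * K * √(2 * r) := by field_simp

theorem CampanatoHalf.exists_tendsto_average_closedBall (hosc : CampanatoHalf a K)
    (ha : AEStronglyMeasurable a) (hK : 0 ≤ K) (x : ℝ) :
    ∃ L, Tendsto (fun r => ⨍ t in closedBall x r, a t) (𝓝[>] 0) (𝓝 L) ∧
      ∀ r, 0 < r → ‖L - ⨍ t in closedBall x r, a t‖ ≤ 12 * K * √r := by
  have hsqrt_two : √2 ≤ 3 / 2 := Real.sqrt_le_iff.mpr ⟨by norm_num, by norm_num⟩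
  have hstep : ∀ r' r, 0 < r' → r' ≤ r → r ≤ 4 * r' →
      ‖(⨍ t in closedBall x r', a t) - ⨍ t in closedBall x r, a t‖ ≤ 6 * K * √r := by
    intro r' r hr' hr hr4
    calc _ ≤ r / r' * K * √(2 * r) :=
          hosc.norm_average_closedBall_sub_le ha hK hr' (closedBall_subset_closedBall hr)
      _ ≤ 4 * K * (3 / 2 * √r) := by
          rw [Real.sqrt_mul zero_le_two]
          gcongr
          rwa [div_le_iff₀ hr']
      _ = 6 * K * √r := by ring
  refine exists_tendsto_nhdsGT_zero_of_norm_sub_le fun r' r hr' hr => ?_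
  exact (norm_sub_le_of_norm_sub_le_of_le_four_mul (by positivity) hstep hr' hr).trans
    (by nlinarith [Real.sqrt_nonneg r'])

theorem CampanatoHalf.norm_sub_le (hosc : CampanatoHalf a K) (ha : AEStronglyMeasurable a)
    (hK : 0 ≤ K) {b : ℝ → E} {c : ℝ}
    (hb : ∀ x r, 0 < r → ‖b x - ⨍ t in closedBall x r, a t‖ ≤ c * √r) (t s : ℝ) :
    ‖b t - b s‖ ≤ (2 * c + 6 * K) * √|t - s| := by
  wlog hts : t < s generalizing t s
  · rcases (not_lt.mp hts).eq_or_lt with rfl | hst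
    · simp
    · rw [norm_sub_rev, abs_sub_comm]
      exact this s t hst
  set d := s - t with hd_def
  have hd : 0 < d := sub_pos.mpr hts
  set m := (t + s) / 2 with hm
  have hsqrt_three : √3 ≤ 2 := Real.sqrt_le_iff.mpr ⟨by norm_num, by norm_num⟩
  have hnear : ∀ y, |y - m| = d / 2 →
      ‖b y - ⨍ u in closedBall m (3 * d / 2), a u‖ ≤ (c + 3 * K) * √d := by
    intro y hy
    have hsub : closedBall y d ⊆ closedBall m (3 * d / 2) :=
      closedBall_subset_closedBall' (by rw [Real.dist_eq, hy]; linarith)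
    calc _ ≤ ‖b y - ⨍ u in closedBall y d, a u‖
          + ‖(⨍ u in closedBall y d, a u) - ⨍ u in closedBall m (3 * d / 2), a u‖ :=
          norm_sub_le_norm_sub_add_norm_sub ..
      _ ≤ c * √d + 3 * d / 2 / d * K * √(2 * (3 * d / 2)) :=
          add_le_add (hb y d hd) (hosc.norm_average_closedBall_sub_le ha hK hd hsub)
      _ = c * √d + 3 / 2 * K * (√3 * √d) := by
          rw [← Real.sqrt_mul zero_le_three, show 2 * (3 * d / 2) = 3 * d by ring]
          field_simp
      _ ≤ (c + 3 * K) * √d := by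
          nlinarith [mul_nonneg (sub_nonneg.mpr hsqrt_three) (mul_nonneg hK (Real.sqrt_nonneg d))]
  calc ‖b t - b s‖
      ≤ ‖b t - ⨍ u in closedBall m (3 * d / 2), a u‖
        + ‖b s - ⨍ u in closedBall m (3 * d / 2), a u‖ := by
        rw [norm_sub_rev (b s)]; exact norm_sub_le_norm_sub_add_norm_sub ..
    _ ≤ (c + 3 * K) * √d + (c + 3 * K) * √d := by
        gcongr <;> refine hnear _ ?_
        · rw [abs_of_neg] <;> linarith
        · rw [abs_of_pos] <;> linarith
    _ = (2 * c + 6 * K) * √|t - s| := by rw [abs_sub_comm, abs_of_pos hd]; ring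

theorem CampanatoHalf.exists_ae_eq_norm_sub_le (hosc : CampanatoHalf a K)
    (ha : AEStronglyMeasurable a) (hK : 0 ≤ K) :
    ∃ b : ℝ → E, (∀ᵐ t, a t = b t) ∧ ∀ t s, ‖b t - b s‖ ≤ 30 * K * √|t - s| := by
  choose b hb hbA using hosc.exists_tendsto_average_closedBall ha hK
  refine ⟨b, ?_, fun t s => ?_⟩
  · filter_upwards [IsUnifLocDoublingMeasure.ae_tendsto_average volume
      (hosc.locallyIntegrable ha) 1] with x hx
    refine tendsto_nhds_unique (hx (fun _ => x) id tendsto_id ?_) (hb x)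
    filter_upwards [self_mem_nhdsWithin] with r (hr : 0 < r)
    simp [hr.le]
  convert hosc.norm_sub_le ha hK hbA t s using 2
  ring

end Campanato

section ScaleInvariant

variable {E : Type*} [NormedAddCommGroup E] {a : ℝ → E} {M x y : ℝ}

theorem lintegral_lintegral_enorm_sub_sq_le
    (hH : ∫⁻ t in Icc x y, ∫⁻ s in Icc x y, ENNReal.ofReal (‖a t - a s‖ ^ 2 / |t - s| ^ 2)
      ≤ ENNReal.ofReal (M * (y - x))) :
    ∫⁻ t in Icc x y, ∫⁻ s in Icc x y, ‖a t - a s‖ₑ ^ 2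
      ≤ ENNReal.ofReal ((y - x) ^ 2) * ENNReal.ofReal (M * (y - x)) := by
  have hpt : ∀ t ∈ Icc x y, ∀ s ∈ Icc x y, ‖a t - a s‖ₑ ^ 2
      ≤ ENNReal.ofReal ((y - x) ^ 2) * ENNReal.ofReal (‖a t - a s‖ ^ 2 / |t - s| ^ 2) := by
    intro t ht s hs
    rw [← ofReal_norm, ← ENNReal.ofReal_pow (norm_nonneg _), ← ENNReal.ofReal_mul (sq_nonneg _)]
    apply ENNReal.ofReal_le_ofReal
    rcases eq_or_ne t s with rfl | hts
    · simp
    have hdist : |t - s| ≤ y - x :=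
      abs_sub_le_iff.mpr ⟨by linarith [ht.2, hs.1], by linarith [ht.1, hs.2]⟩
    have hpos : 0 < |t - s| := abs_pos.mpr (sub_ne_zero.mpr hts)
    rw [mul_div_assoc', le_div_iff₀ (by positivity), mul_comm]
    gcongr
  calc _ ≤ ∫⁻ t in Icc x y, ∫⁻ s in Icc x y,
        ENNReal.ofReal ((y - x) ^ 2) * ENNReal.ofReal (‖a t - a s‖ ^ 2 / |t - s| ^ 2) :=
        setLIntegral_mono' measurableSet_Icc fun t ht =>
          setLIntegral_mono' measurableSet_Icc fun s hs => hpt t ht s hs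
    _ = ENNReal.ofReal ((y - x) ^ 2) * ∫⁻ t in Icc x y, ∫⁻ s in Icc x y,
        ENNReal.ofReal (‖a t - a s‖ ^ 2 / |t - s| ^ 2) := by
        simp_rw [lintegral_const_mul' _ _ ofReal_ne_top]
    _ ≤ _ := by gcongr

theorem lintegral_lintegral_enorm_sub_le (ha : StronglyMeasurable a) (hM : 0 ≤ M) (hxy : x ≤ y)
    (hH : ∫⁻ t in Icc x y, ∫⁻ s in Icc x y, ENNReal.ofReal (‖a t - a s‖ ^ 2 / |t - s| ^ 2)
      ≤ ENNReal.ofReal (M * (y - x))) :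
    ∫⁻ t in Icc x y, ∫⁻ s in Icc x y, ‖a t - a s‖ₑ
      ≤ ENNReal.ofReal (√M * (y - x) ^ 2 * √(y - x)) := by
  set μ := volume.restrict (Icc x y)
  have hmeas : Measurable fun p : ℝ × ℝ => ‖a p.1 - a p.2‖ₑ :=
    ((ha.comp_measurable measurable_fst).sub (ha.comp_measurable measurable_snd)).enorm
  have hsq := lintegral_lintegral_enorm_sub_sq_le hH
  have hμμ : (μ.prod μ) univ = ENNReal.ofReal ((y - x) ^ 2) := by
    rw [← univ_prod_univ, Measure.prod_prod, Measure.restrict_apply_univ, Real.volume_Icc,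
      ← ENNReal.ofReal_mul (sub_nonneg.mpr hxy), sq]
  rw [lintegral_lintegral (hmeas.pow_const 2).aemeasurable] at hsq
  rw [lintegral_lintegral hmeas.aemeasurable, ← ENNReal.pow_le_pow_left_iff two_ne_zero]
  calc _ ≤ (μ.prod μ) univ * ∫⁻ p, ‖a p.1 - a p.2‖ₑ ^ 2 ∂μ.prod μ :=
        lintegral_sq_le_measure_univ_mul hmeas.aemeasurable
    _ ≤ ENNReal.ofReal ((y - x) ^ 2)
        * (ENNReal.ofReal ((y - x) ^ 2) * ENNReal.ofReal (M * (y - x))) := by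
        rw [hμμ]; gcongr
    _ = ENNReal.ofReal (√M * (y - x) ^ 2 * √(y - x)) ^ 2 := by
        rw [← ENNReal.ofReal_pow (by positivity), ← ENNReal.ofReal_mul (by positivity),
          ← ENNReal.ofReal_mul (by positivity), mul_pow, mul_pow, Real.sq_sqrt hM,
          Real.sq_sqrt (sub_nonneg.mpr hxy)]
        ring_nf

end ScaleInvariant

/-- **The scale-invariant condition implies 1/2-Hölder continuity.**
There is an absolute constant `C > 0` such that: whenever `a : ℝ → ℂ` is measurable
and satisfies `∫_I ∫_I |a(t)-a(s)|²/|t-s|² ds dt ≤ M ℓ(I)` for all bounded intervals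
`I`, then `a` has a representative `b` that is `1/2`-Hölder continuous with
`|b(t) - b(s)| ≤ C √M |t-s|^{1/2}`. -/
theorem scale_invariant_implies_half_holder :
    ∃ C : ℝ, 0 < C ∧
      ∀ (a : ℝ → ℂ), Measurable a → ∀ M : ℝ, 0 ≤ M →
      (∀ x y : ℝ, x ≤ y →
        ∫⁻ t in Icc x y, ∫⁻ s in Icc x y,
          ENNReal.ofReal (‖a t - a s‖ ^ 2 / |t - s| ^ 2)
          ≤ ENNReal.ofReal (M * (y - x))) →
      ∃ b : ℝ → ℂ, (∀ᵐ t : ℝ, a t = b t) ∧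
        ∀ t s : ℝ, ‖b t - b s‖ ≤ C * Real.sqrt M * Real.sqrt |t - s| := by
  refine ⟨30, by norm_num, fun a ha M hM H => ?_⟩
  have hosc : CampanatoHalf a √M := fun x y hxy =>
    lintegral_lintegral_enorm_sub_le ha.stronglyMeasurable hM hxy.le (H x y hxy.le)
  exact hosc.exists_ae_eq_norm_sub_le ha.aestronglyMeasurable (Real.sqrt_nonneg M)
end
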